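/- arXiv:1709.06249 — 4 statements merged into one kernel-verified Lean document; each statement's English description precedes it below -/
import Mathlib

section
/- Let κ be a regular uncountable cardinal, A a set with κ ⊆ A, and D a normal filter on [A]^{<κ} (i.e., D contains, for every a ∈ [A]^{<κ}, the set {b ∈ [A]^{<κ} : a ⊆ b}, and D is closed under diagonal intersections Δ_{x∈A} A_x = {a ∈ [A]^{<κ} : ∀x ∈ a, a ∈ A_x}). If X ⊆ [A]^{<κ} is D-positive (i.e., its complement is not in D) and F : X → A is regressive (F(a) ∈ a for every nonempty a ∈ X), then there exist a D-positive set Y ⊆ X and an element x ∈ A such that F(a) = x for all a ∈ Y. -/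
universe u

/-- Normal filters on `[A]^{<κ}` satisfy the pressing-down
(Fodor-type) property for regressive functions on positive sets. -/
theorem stmt0
    (κ : Cardinal.{u}) (hreg : κ.IsRegular) (hunc : Cardinal.aleph0 < κ)
    (A : Set Ordinal.{u}) (hA : ∀ o : Ordinal, o < κ.ord → o ∈ A)
    (P : Set (Set Ordinal.{u}))
    (hP : P = {a | a ⊆ A ∧ Cardinal.mk a < Cardinal.lift.{u + 1} κ})
    (D : Set (Set (Set Ordinal.{u})))
    (hDsub : ∀ X ∈ D, X ⊆ P)
    (hDup : ∀ X ∈ D, ∀ Y, X ⊆ Y → Y ⊆ P → Y ∈ D)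
    (hDint : ∀ X ∈ D, ∀ Y ∈ D, X ∩ Y ∈ D)
    (hDcone : ∀ a ∈ P, {b ∈ P | a ⊆ b} ∈ D)
    (hDdiag : ∀ f : Ordinal.{u} → Set (Set Ordinal.{u}), (∀ x ∈ A, f x ∈ D) →
      {a ∈ P | ∀ x ∈ a, a ∈ f x} ∈ D)
    (X : Set (Set Ordinal.{u})) (hX : X ⊆ P) (hXpos : P \ X ∉ D)
    (F : Set Ordinal.{u} → Ordinal.{u})
    (hF : ∀ a ∈ X, a.Nonempty → F a ∈ a) :
    ∃ Y, Y ⊆ X ∧ P \ Y ∉ D ∧ ∃ x ∈ A, ∀ a ∈ Y, F a = x := by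
  by_contra hcon
  push_neg at hcon
  -- for every x ∈ A, the set Y_x = {a ∈ X | F a = x} is null
  have hnull : ∀ x ∈ A, P \ {a ∈ X | F a = x} ∈ D := by
    intro x hx
    by_contra h
    obtain ⟨a, ha, hne⟩ := hcon {a ∈ X | F a = x} (fun a ha => ha.1) h x hx
    exact hne ha.2
  set f : Ordinal.{u} → Set (Set Ordinal.{u}) := fun x => P \ {a ∈ X | F a = x} with hf
  have hS : {a ∈ P | ∀ x ∈ a, a ∈ f x} ∈ D := hDdiag f hnull
  -- the cone over {0}
  have h0A : (0 : Ordinal) ∈ A := hA 0 (by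
    simpa using Cardinal.ord_lt_ord.2 hreg.pos)
  have hsing : ({(0 : Ordinal)} : Set Ordinal) ∈ P := by
    rw [hP]
    refine ⟨by simpa using h0A, ?_⟩
    have h1 : Cardinal.mk ({(0 : Ordinal)} : Set Ordinal) = 1 := Cardinal.mk_singleton _
    rw [h1]
    calc (1 : Cardinal) < Cardinal.aleph0 := Cardinal.one_lt_aleph0
      _ ≤ Cardinal.lift.{u+1} Cardinal.aleph0 := by simp
      _ ≤ Cardinal.lift.{u+1} κ := Cardinal.lift_le.2 hunc.le
  have hcone : {b ∈ P | ({(0 : Ordinal)} : Set Ordinal) ⊆ b} ∈ D := hDcone _ hsing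
  have hboth := hDint _ hS _ hcone
  apply hXpos
  refine hDup _ hboth _ ?_ (fun a ha => ha.1)
  rintro a ⟨⟨haP, hdiag⟩, -, hsub⟩
  refine ⟨haP, fun haX => ?_⟩
  have hne : a.Nonempty := ⟨0, hsub rfl⟩
  have hFa : F a ∈ a := hF a haX hne
  exact (hdiag (F a) hFa).2 ⟨haX, rfl⟩
end

section
/- Let Γ : ω × ω → ω be a pairing bijection. Suppose P* is a family of subsets of ω, ⟨a_n : n < ω⟩ is a sequence of subsets of ω, and let a* = {Γ(i,n) : n < ω, i ∈ a_n}. Let M be a collection of subsets of ω closed under the operations b ↦ b^{[n]} := {Γ(i,m) : i,m < ω, and (m = n → i ∈ b)}, and suppose that for every b ∈ M with a* ⊆ b there is c ∈ P* with a* ⊆ c ⊆ b. Define P = {{i : Γ(i,n) ∈ c} : n < ω, c ∈ P*}. Then for every n < ω and every b ∈ M with a_n ⊆ b, there exists c' ∈ P with a_n ⊆ c' ⊆ b. -/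
/-- the coding argument: a witness for the coded set `a*`
yields simultaneous witnesses for all the sets `a_n`. -/
theorem stmt2 (Γ : ℕ × ℕ → ℕ) (hΓ : Function.Bijective Γ)
    (Pstar : Set (Set ℕ)) (a : ℕ → Set ℕ)
    (astar : Set ℕ) (hastar : astar = {k | ∃ n i, i ∈ a n ∧ Γ (i, n) = k})
    (M : Set (Set ℕ))
    (hMclosed : ∀ b ∈ M, ∀ n : ℕ, {k | ∃ i m, (m = n → i ∈ b) ∧ Γ (i, m) = k} ∈ M)
    (hwit : ∀ b ∈ M, astar ⊆ b → ∃ c ∈ Pstar, astar ⊆ c ∧ c ⊆ b)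
    (P : Set (Set ℕ)) (hP : P = {d | ∃ n : ℕ, ∃ c ∈ Pstar, d = {i | Γ (i, n) ∈ c}})
    (n : ℕ) (b : Set ℕ) (hb : b ∈ M) (hab : a n ⊆ b) :
    ∃ c' ∈ P, a n ⊆ c' ∧ c' ⊆ b := by
  set b' : Set ℕ := {k | ∃ i m, (m = n → i ∈ b) ∧ Γ (i, m) = k} with hb'
  have hb'M : b' ∈ M := hMclosed b hb n
  have hsub : astar ⊆ b' := by
    rintro k hk
    rw [hastar] at hk
    obtain ⟨m, i, hi, hk⟩ := hk
    exact ⟨i, m, fun hmn => hab (hmn ▸ hi), hk⟩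
  obtain ⟨c, hcP, hac, hcb⟩ := hwit b' hb'M hsub
  refine ⟨{i | Γ (i, n) ∈ c}, ?_, ?_, ?_⟩
  · rw [hP]; exact ⟨n, c, hcP, rfl⟩
  · intro i hi
    exact hac (hastar ▸ ⟨n, i, hi, rfl⟩)
  · intro i hi
    obtain ⟨i', m', him, heq⟩ := hcb hi
    obtain ⟨h1, h2⟩ := Prod.mk.injEq .. ▸ hΓ.injective heq
    exact h1 ▸ him h2
end

section
/- Let κ be a regular uncountable cardinal such that |α|^{<θ} < κ for all α < κ, where θ < κ is a cardinal. Let D be a normal filter on κ with {δ < κ : cf(δ) ≥ θ} ∈ D. Then D has the Δ-system θ-property: for any D-positive Y ⊆ κ and any sequence ⟨B_α : α ∈ Y⟩ of sets each of cardinality < θ, there is a D-positive Z ⊆ Y such that ⟨B_α : α ∈ Z⟩ forms a Δ-system, i.e., there is a set B* with B_α ∩ B_β = B* for all distinct α, β ∈ Z. -/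
/-!
Code the sets `B α` injectively as sets of ordinals below `κ`. For `δ` of cofinality `≥ θ` the
trace `B δ ∩ δ` has fewer than `cf δ` elements, so its supremum is below `δ`; by Fodor's lemma it
equals a fixed `γ < κ` on a positive set. There are at most `θ · |γ + 1|^{<θ} < κ` subsets of
`γ + 1` of size `< θ`, so by normality a single trace `R` occurs on a positive set. A diagonal
intersection thins this set to one where `sup B α < β` whenever `α < β`, and then
`B α ∩ B β = B β ∩ β = R`.
-/

open Cardinal Set

universe v

section DeltaSystem

variable {ι α β : Type*}

def IsDeltaSystem (Z : Set ι) (B : ι → Set α) (R : Set α) : Prop :=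
  ∀ i ∈ Z, ∀ j ∈ Z, i ≠ j → B i ∩ B j = R

theorem IsDeltaSystem.of_lt [LinearOrder ι] {Z : Set ι} {B : ι → Set α} {R : Set α}
    (h : ∀ i ∈ Z, ∀ j ∈ Z, i < j → B i ∩ B j = R) : IsDeltaSystem Z B R := by
  intro i hi j hj hij
  rcases hij.lt_or_gt with hlt | hlt
  · exact h i hi j hj hlt
  · rw [inter_comm]
    exact h j hj i hi hlt

theorem IsDeltaSystem.of_image {Z : Set ι} {B : ι → Set α} {R : Set β} {f : α → β} {U : Set α}
    (hf : InjOn f U) (hB : ∀ i ∈ Z, B i ⊆ U) (h : IsDeltaSystem Z (fun i => f '' B i) R) :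
    IsDeltaSystem Z B (f ⁻¹' R ∩ U) := by
  intro i hi j hj hij
  rw [← h i hi j hj hij, ← hf.image_inter (hB i hi) (hB j hj),
    hf.preimage_image_inter (inter_subset_left.trans (hB i hi))]

theorem IsDeltaSystem.of_inter_Iio_eq [LinearOrder ι] {Z : Set ι} {B : ι → Set ι} {R : Set ι}
    (htrace : ∀ j ∈ Z, B j ∩ Iio j = R) (hlt : ∀ i ∈ Z, ∀ j ∈ Z, i < j → B i ⊆ Iio j) :
    IsDeltaSystem Z B R := by
  refine IsDeltaSystem.of_lt fun i hi j hj hij => Subset.antisymm ?_ ?_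
  · rintro x ⟨hxi, hxj⟩
    exact htrace j hj ▸ ⟨hxj, hlt i hi j hj hij hxi⟩
  · intro x hx
    exact ⟨(htrace i hi ▸ hx).1, (htrace j hj ▸ hx).1⟩

end DeltaSystem

namespace Cardinal

theorem lift_powerlt_le (a b : Cardinal.{u}) : lift.{v} a ^< lift.{v} b ≤ lift.{v} (a ^< b) := by
  refine powerlt_le.2 fun x hx => ?_
  obtain ⟨y, hy, rfl⟩ := lt_lift_iff.1 hx
  rw [← lift_power]
  exact lift_le.2 (le_powerlt a hy)

theorem mk_setOf_subset_mk_lt_le {α : Type v} (s : Set α) (c : Cardinal.{v}) :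
    #{t : Set α | t ⊆ s ∧ #t < c} ≤ c * #s ^< c := by
  let F : (Σ o : Iio c.ord, o.1.ToType → s) → {t : Set α | t ⊆ s ∧ #t < c} := fun x =>
    ⟨range fun i => (x.2 i : α), range_subset_iff.2 fun i => (x.2 i).2,
      mk_range_le.trans_lt (by rw [mk_toType, ← lt_ord]; exact x.1.2)⟩
  have hF : Function.Surjective F := by
    rintro ⟨t, hts, htc⟩
    obtain ⟨e⟩ : Nonempty ((#t).ord.ToType ≃ t) := by
      rw [← Cardinal.eq, mk_toType, card_ord]
    refine ⟨⟨⟨(#t).ord, ord_lt_ord.2 htc⟩, fun i => ⟨e i, hts (e i).2⟩⟩, ?_⟩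
    ext x
    simp [F, e.exists_congr_left]
  have hsum : #(Σ o : Iio c.ord, o.1.ToType → s) ≤ lift.{v + 1} (c * #s ^< c) := by
    rw [mk_sigma]
    calc (sum fun o : Iio c.ord => #(o.1.ToType → s))
        ≤ sum fun _ : Iio c.ord => #s ^< c := sum_le_sum _ _ fun o => by
          rw [← power_def, mk_toType]
          exact le_powerlt _ (lt_ord.1 o.2)
      _ = lift.{v + 1} (c * #s ^< c) := by simp
  have := lift_mk_le_lift_mk_of_surjective hF
  rw [← lift_le.{v + 1}]
  simpa using this.trans (lift_le.2 hsum)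

theorem mk_biUnion_le_of_subset_Iio {V : Type u} {κ θ : Cardinal.{u}} (hκ : ℵ₀ ≤ κ)
    (hθ : θ ≤ κ) {Y : Set Ordinal.{u}} (hY : Y ⊆ Iio κ.ord) {B : Ordinal.{u} → Set V}
    (hB : ∀ α ∈ Y, #(B α) < θ) : #(⋃ α ∈ Y, B α) ≤ κ := by
  rw [← lift_le.{u + 1}]
  calc lift.{u + 1} #(⋃ α ∈ Y, B α)
      ≤ lift.{u} #Y * ⨆ α : Y, lift.{u + 1} #(B α) := mk_biUnion_le_lift _ _
    _ ≤ lift.{u + 1} κ * lift.{u + 1} κ := by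
      gcongr
      · rw [lift_id'.{u, u + 1}]
        simpa using mk_le_mk_of_subset hY
      · exact ciSup_le' fun α => lift_le.2 ((hB α α.2).le.trans hθ)
    _ = lift.{u + 1} κ := by rw [← lift_mul, mul_eq_self hκ]

end Cardinal

theorem Ordinal.exists_injOn_mapsTo_Iio {V : Type u} {U : Set V} {o : Ordinal.{u}}
    (h : #U ≤ o.card) : ∃ g : V → Ordinal.{u}, InjOn g U ∧ MapsTo g U (Iio o) := by
  classical
  obtain ⟨e⟩ : Nonempty (U ↪ o.ToType) := by rwa [← le_def, mk_toType]
  let f : U → Iio o := fun v => ToType.mk.symm (e v)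
  refine ⟨fun v => if hv : v ∈ U then f ⟨v, hv⟩ else 0, fun x hx y hy hxy => ?_, fun x hx => ?_⟩
  · simp only [dif_pos hx, dif_pos hy] at hxy
    exact congrArg Subtype.val (e.injective (ToType.mk.symm.injective
      (Subtype.val_injective hxy)))
  · simpa only [dif_pos hx] using (f ⟨x, hx⟩).2

structure IsNormalFilterBelow (κ : Ordinal.{u}) (D : Set (Set Ordinal.{u})) : Prop where
  mem_of_subset : ∀ X ∈ D, ∀ Y, X ⊆ Y → Y ⊆ Iio κ → Y ∈ D
  inter_mem : ∀ X ∈ D, ∀ Y ∈ D, X ∩ Y ∈ D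
  tail_mem : ∀ γ ∈ Iio κ, {δ ∈ Iio κ | γ < δ} ∈ D
  diag_mem : ∀ f : Ordinal.{u} → Set Ordinal.{u}, (∀ γ ∈ Iio κ, f γ ∈ D) →
    {δ ∈ Iio κ | ∀ γ < δ, δ ∈ f γ} ∈ D

def IsPositive (D : Set (Set Ordinal.{u})) (κ : Ordinal.{u}) (Y : Set Ordinal.{u}) : Prop :=
  Iio κ \ Y ∉ D

section NormalFilter

variable {κ : Ordinal.{u}} {D : Set (Set Ordinal.{u})} {S X Y Y' : Set Ordinal.{u}}

theorem IsPositive.nonempty (hK : Iio κ ∈ D) (hY : IsPositive D κ Y) : Y.Nonempty := by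
  rw [nonempty_iff_ne_empty]
  rintro rfl
  exact hY (by simpa using hK)

theorem IsPositive.mono (hD : IsNormalFilterBelow κ D) (hY : IsPositive D κ Y) (hYY' : Y ⊆ Y') :
    IsPositive D κ Y' :=
  fun h => hY (hD.mem_of_subset _ h _ (sdiff_subset_sdiff_right hYY') sdiff_subset)

theorem IsPositive.inter_mem (hD : IsNormalFilterBelow κ D) (hY : IsPositive D κ Y) (hX : X ∈ D) :
    IsPositive D κ (Y ∩ X) := by
  intro h
  refine hY (hD.mem_of_subset _ (hD.inter_mem _ h _ hX) _ ?_ sdiff_subset)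
  rintro x ⟨⟨hxκ, hxYX⟩, hxX⟩
  exact ⟨hxκ, fun hxY => hxYX ⟨hxY, hxX⟩⟩

namespace IsNormalFilterBelow

/-- Fodor's lemma. -/
theorem exists_isPositive_fiber_of_regressive (hD : IsNormalFilterBelow κ D)
    (hS : IsPositive D κ S) {g : Ordinal.{u} → Ordinal.{u}} (hg : ∀ δ ∈ S, g δ < δ) :
    ∃ γ, IsPositive D κ {δ ∈ S | g δ = γ} := by
  by_contra! h
  refine hS (hD.mem_of_subset _ (hD.diag_mem _ fun γ _ => not_not.1 (h γ)) _ ?_ sdiff_subset)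
  rintro δ ⟨hδκ, hδ⟩
  exact ⟨hδκ, fun hδS => (hδ (g δ) (hg δ hδS)).2 ⟨hδS, rfl⟩⟩

theorem exists_isPositive_fiber_of_lt (hD : IsNormalFilterBelow κ D) (hS : IsPositive D κ S)
    {g : Ordinal.{u} → Ordinal.{u}} {μ : Ordinal.{u}} (hμ : μ < κ) (hg : ∀ δ ∈ S, g δ < μ) :
    ∃ γ, IsPositive D κ {δ ∈ S | g δ = γ} := by
  obtain ⟨γ, hγ⟩ := hD.exists_isPositive_fiber_of_regressive (hS.inter_mem hD (hD.tail_mem μ hμ))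
    (g := g) fun δ hδ => (hg δ hδ.1).trans hδ.2.2
  exact ⟨γ, hγ.mono hD fun δ hδ => ⟨hδ.1.1, hδ.2⟩⟩

theorem exists_isPositive_subset_forall_lt (hD : IsNormalFilterBelow κ D)
    (hS : IsPositive D κ S) (h : Ordinal.{u} → Ordinal.{u}) (hh : ∀ γ ∈ S, h γ < κ) :
    ∃ Z ⊆ S, IsPositive D κ Z ∧ ∀ α ∈ Z, ∀ β ∈ Z, α < β → h α < β := by
  have hdiag := hD.diag_mem (fun γ => {δ ∈ Iio κ | γ ∈ S → h γ < δ}) fun γ hγ => by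
    by_cases hγS : γ ∈ S
    · exact hD.mem_of_subset _ (hD.tail_mem _ (hh γ hγS)) _
        (fun δ hδ => ⟨hδ.1, fun _ => hδ.2⟩) (sep_subset _ _)
    · exact hD.mem_of_subset _ (hD.tail_mem γ hγ) _
        (fun δ hδ => ⟨hδ.1, fun h => absurd h hγS⟩) (sep_subset _ _)
  exact ⟨_, inter_subset_left, hS.inter_mem hD hdiag,
    fun α hα β hβ hαβ => (hβ.2.2 α hαβ).2 hα.1⟩

theorem exists_isPositive_inter_Iio_subset_Iic (hD : IsNormalFilterBelow κ D)
    {θ : Cardinal.{u}} (hcof : {δ ∈ Iio κ | θ ≤ δ.cof} ∈ D) (hY : IsPositive D κ Y)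
    {b : Ordinal.{u} → Set Ordinal.{u}} (hb : ∀ α ∈ Y, #(b α) < lift.{u + 1} θ) :
    ∃ S ⊆ Y, IsPositive D κ S ∧ ∃ γ < κ, ∀ δ ∈ S, b δ ∩ Iio δ ⊆ Iic γ := by
  have hsup : ∀ δ ∈ Y ∩ {δ ∈ Iio κ | θ ≤ δ.cof}, sSup (b δ ∩ Iio δ) < δ := fun δ hδ =>
    Ordinal.sSup_lt_of_lt_cof (by
      rw [← Ordinal.lift_cof]
      exact (mk_le_mk_of_subset inter_subset_left).trans_lt
        ((hb δ hδ.1).trans_le (lift_le.2 hδ.2.2))) fun _ hx => hx.2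
  obtain ⟨γ, hγ⟩ := hD.exists_isPositive_fiber_of_regressive (hY.inter_mem hD hcof) hsup
  obtain ⟨δ₀, hδ₀, rfl⟩ := hγ.nonempty (hD.mem_of_subset _ hcof _ (sep_subset _ _) subset_rfl)
  refine ⟨_, fun δ hδ => hδ.1.1, hγ, _, (hsup δ₀ hδ₀).trans hδ₀.2.1, fun δ hδ x hx => ?_⟩
  rw [mem_Iic, ← hδ.2]
  exact le_csSup ⟨δ, fun _ hy => hy.2.le⟩ hx

theorem exists_isPositive_fiber_of_mk_lt {κ : Cardinal.{u}}
    (hD : IsNormalFilterBelow κ.ord D) (hS : IsPositive D κ.ord S) {ι : Type (u + 1)}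
    (c : Ordinal.{u} → ι) (hc : #(c '' S) < lift.{u + 1} κ) :
    ∃ x, IsPositive D κ.ord {δ ∈ S | c δ = x} := by
  classical
  obtain ⟨μ, hμ, hμc⟩ := lt_lift_iff.1 hc
  obtain ⟨e⟩ : Nonempty (c '' S ≃ Iio μ.ord) := by
    rw [← Cardinal.eq, mk_Iio_ordinal, card_ord, hμc]
  let g : Ordinal.{u} → Ordinal.{u} := fun δ => if h : c δ ∈ c '' S then e ⟨c δ, h⟩ else 0
  have hg : ∀ δ (hδ : δ ∈ S), g δ = e ⟨c δ, mem_image_of_mem c hδ⟩ := fun δ hδ =>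
    dif_pos (mem_image_of_mem c hδ)
  obtain ⟨γ, hγ⟩ := hD.exists_isPositive_fiber_of_lt hS (ord_lt_ord.2 hμ) (g := g)
    fun δ hδ => hg δ hδ ▸ (e _).2
  rcases eq_empty_or_nonempty {δ ∈ S | g δ = γ} with hempty | ⟨δ₀, hδ₀S, hδ₀⟩
  · exact ⟨c 0, hγ.mono hD (hempty ▸ empty_subset _)⟩
  refine ⟨c δ₀, hγ.mono hD fun δ ⟨hδS, hδ⟩ => ⟨hδS, ?_⟩⟩
  rw [← hδ₀, hg δ hδS, hg δ₀ hδ₀S] at hδ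
  exact congrArg Subtype.val (e.injective (Subtype.val_injective hδ))

theorem exists_isPositive_isDeltaSystem {κ θ : Cardinal.{u}}
    (hreg : κ.IsRegular) (hθ : θ < κ)
    (hsmall : ∀ α : Ordinal.{u}, α < κ.ord → α.card ^< θ < κ)
    (hD : IsNormalFilterBelow κ.ord D) (hcof : {δ ∈ Iio κ.ord | θ ≤ δ.cof} ∈ D)
    (hY : IsPositive D κ.ord Y)
    {b : Ordinal.{u} → Set Ordinal.{u}} (hbκ : ∀ α ∈ Y, b α ⊆ Iio κ.ord)
    (hb : ∀ α ∈ Y, #(b α) < lift.{u + 1} θ) :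
    ∃ Z ⊆ Y, IsPositive D κ.ord Z ∧ ∃ R, IsDeltaSystem Z b R := by
  obtain ⟨S, hSY, hS, γ, hγ, htrace⟩ := hD.exists_isPositive_inter_Iio_subset_Iic hcof hY hb
  have hγ' : Order.succ γ < κ.ord := (isSuccLimit_ord hreg.aleph0_le).succ_lt hγ
  have htraces : #((fun δ => b δ ∩ Iio δ) '' S) < lift.{u + 1} κ := calc
    _ ≤ #{t : Set Ordinal.{u} | t ⊆ Iic γ ∧ #t < lift.{u + 1} θ} := by
      refine mk_le_mk_of_subset ?_
      rintro _ ⟨δ, hδ, rfl⟩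
      exact ⟨htrace δ hδ, (mk_le_mk_of_subset inter_subset_left).trans_lt (hb δ (hSY hδ))⟩
    _ ≤ lift.{u + 1} θ * #(Iic γ) ^< lift.{u + 1} θ := mk_setOf_subset_mk_lt_le _ _
    _ ≤ lift.{u + 1} (θ * (Order.succ γ).card ^< θ) := by
      rw [← Order.Iio_succ, mk_Iio_ordinal, lift_mul]
      gcongr
      exact lift_powerlt_le _ _
    _ < lift.{u + 1} κ := lift_lt.2 (mul_lt_of_lt hreg.aleph0_le hθ (hsmall _ hγ'))
  obtain ⟨R, hR⟩ := hD.exists_isPositive_fiber_of_mk_lt hS _ htraces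
  have hsup : ∀ α ∈ {δ ∈ S | b δ ∩ Iio δ = R}, sSup (b α) < κ.ord := fun α hα =>
    Ordinal.sSup_lt_of_lt_cof (by
      rw [← Ordinal.lift_cof, hreg.cof_ord]
      exact (hb α (hSY hα.1)).trans (lift_lt.2 hθ)) (hbκ α (hSY hα.1))
  obtain ⟨Z, hZ, hZpos, hlt⟩ := hD.exists_isPositive_subset_forall_lt hR _ hsup
  refine ⟨Z, fun α hα => hSY (hZ hα).1, hZpos, R,
    IsDeltaSystem.of_inter_Iio_eq (fun β hβ => (hZ hβ).2) fun α hα β hβ hαβ x hx => ?_⟩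
  exact (le_csSup ⟨κ.ord, fun y hy => (hbκ α (hSY (hZ hα).1) hy).le⟩ hx).trans_lt
    (hlt α hα β hβ hαβ)

end IsNormalFilterBelow

end NormalFilter

theorem stmt4_general {V : Type u} (κ θ : Cardinal.{u})
    (hreg : κ.IsRegular) (hθ : θ < κ)
    (hsmall : ∀ α : Ordinal.{u}, α < κ.ord → Cardinal.powerlt α.card θ < κ)
    (K : Set Ordinal.{u}) (hK : K = Set.Iio κ.ord)
    (D : Set (Set Ordinal.{u}))
    (hup : ∀ X ∈ D, ∀ Y, X ⊆ Y → Y ⊆ K → Y ∈ D)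
    (hint : ∀ X ∈ D, ∀ Y ∈ D, X ∩ Y ∈ D)
    (htail : ∀ γ ∈ K, {δ ∈ K | γ < δ} ∈ D)
    (hdiag : ∀ f : Ordinal.{u} → Set Ordinal.{u}, (∀ γ ∈ K, f γ ∈ D) →
      {δ ∈ K | ∀ γ < δ, δ ∈ f γ} ∈ D)
    (hcof : {δ ∈ K | θ ≤ δ.cof} ∈ D)
    (Y : Set Ordinal.{u}) (hY : Y ⊆ K) (hpos : K \ Y ∉ D)
    (B : Ordinal.{u} → Set V) (hB : ∀ α ∈ Y, Cardinal.mk (B α) < θ) :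
    ∃ Z ⊆ Y, K \ Z ∉ D ∧
      ∃ Bs : Set V, ∀ α ∈ Z, ∀ β ∈ Z, α ≠ β → B α ∩ B β = Bs := by
  subst hK
  have hD : IsNormalFilterBelow κ.ord D := ⟨hup, hint, htail, hdiag⟩
  have hU : #(⋃ α ∈ Y, B α) ≤ κ.ord.card := by
    rw [card_ord]
    exact mk_biUnion_le_of_subset_Iio hreg.aleph0_le hθ.le hY hB
  obtain ⟨g, hg, hgκ⟩ := Ordinal.exists_injOn_mapsTo_Iio hU
  have hBU : ∀ α ∈ Y, B α ⊆ ⋃ α ∈ Y, B α := fun α hα => subset_biUnion_of_mem hα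
  obtain ⟨Z, hZY, hZ, R, hR⟩ := hD.exists_isPositive_isDeltaSystem hreg hθ hsmall hcof hpos
    (b := fun α => g '' B α) (fun α hα => image_subset_iff.2 fun v hv => hgκ (hBU α hα hv))
    fun α hα => by
      have := (mk_image_le_lift (f := g) (s := B α)).trans_lt (lift_lt.2 (hB α hα))
      rwa [lift_id'.{u, u + 1}] at this
  exact ⟨Z, hZY, hZ, _, hR.of_image hg fun α hα => hBU α (hZY hα)⟩

/-- a normal filter `D` on a regular uncountable `κ` (with
`|α|^{<θ} < κ` for all `α < κ`) concentrating on ordinals of cofinality `≥ θ`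
has the Δ-system `θ`-property. -/
theorem stmt4 {V : Type u} (κ θ : Cardinal.{u})
    (hreg : κ.IsRegular) (hunc : Cardinal.aleph0 < κ) (hθ : θ < κ)
    (hsmall : ∀ α : Ordinal.{u}, α < κ.ord → Cardinal.powerlt α.card θ < κ)
    (K : Set Ordinal.{u}) (hK : K = Set.Iio κ.ord)
    (D : Set (Set Ordinal.{u}))
    (hsub : ∀ X ∈ D, X ⊆ K)
    (hup : ∀ X ∈ D, ∀ Y, X ⊆ Y → Y ⊆ K → Y ∈ D)
    (hint : ∀ X ∈ D, ∀ Y ∈ D, X ∩ Y ∈ D)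
    (htail : ∀ γ ∈ K, {δ ∈ K | γ < δ} ∈ D)
    (hdiag : ∀ f : Ordinal.{u} → Set Ordinal.{u}, (∀ γ ∈ K, f γ ∈ D) →
      {δ ∈ K | ∀ γ < δ, δ ∈ f γ} ∈ D)
    (hcof : {δ ∈ K | θ ≤ δ.cof} ∈ D)
    (Y : Set Ordinal.{u}) (hY : Y ⊆ K) (hpos : K \ Y ∉ D)
    (B : Ordinal.{u} → Set V) (hB : ∀ α ∈ Y, Cardinal.mk (B α) < θ) :
    ∃ Z ⊆ Y, K \ Z ∉ D ∧
      ∃ Bs : Set V, ∀ α ∈ Z, ∀ β ∈ Z, α ≠ β → B α ∩ B β = Bs :=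
  stmt4_general κ θ hreg hθ hsmall K hK D hup hint htail hdiag hcof Y hY hpos B hB
end

section
/- Let κ be regular uncountable, and let D = {S ⊆ κ : S ∪ {δ < κ : cf(δ) < θ} contains a club of κ}, where θ < κ is a regular uncountable cardinal with |α|^{<θ} < κ for all α < κ. Then D is a normal filter on κ and {δ < κ : cf(δ) ≥ θ} ∈ D, hence D has the Δ-system θ-property. -/
/-!
Clubs of a regular uncountable `κ` are closed under diagonal intersections (take closure points
of an `ω`-iteration), which makes `D` a normal filter whose positive sets are those meeting every
club in a point of cofinality `≥ θ`; Fodor's lemma holds for such sets. For the Δ-system property,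
rank the elements of `⋃ B α` injectively by ordinals below `κ`. Pressing down the supremum of the
ranks in `B α` below `α` fixes a bound `ρ`; the roots `B α ∩ rank⁻¹[0, ρ]` range over at most
`θ · |ρ|^{<θ} < κ` sets, so one root occurs on a positive set, and thinning it out to a club of
points beyond which all earlier `B α` are ranked leaves a Δ-system with that root.
-/

universe u

/-- `C` is a closed unbounded subset of the ordinal `κ`. -/
def IsClubIn (C : Set Ordinal.{u}) (κ : Ordinal.{u}) : Prop :=
  C ⊆ Set.Iio κ ∧ (∀ γ < κ, ∃ β ∈ C, γ < β ∧ β < κ) ∧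
    ∀ δ < κ, 0 < δ → (∀ γ < δ, ∃ β ∈ C, γ < β ∧ β < δ) → δ ∈ C

open Cardinal Set Ordinal Order

section Clubs

variable {o : Ordinal.{u}}

theorem isClubIn_Iio (ho : IsSuccLimit o) : IsClubIn (Iio o) o :=
  ⟨subset_rfl, fun γ hγ => ⟨γ + 1, ho.add_one_lt hγ, lt_add_one γ, ho.add_one_lt hγ⟩,
    fun _ hδ _ _ => hδ⟩

theorem isClubIn_Ioo (ho : IsSuccLimit o) {γ : Ordinal.{u}} (hγ : γ < o) :
    IsClubIn (Ioo γ o) o := by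
  refine ⟨fun _ h => h.2, fun β hβ => ?_, fun δ hδ h0 hlim => ?_⟩
  · have hlt := ho.add_one_lt (max_lt hβ hγ)
    exact ⟨max β γ + 1, ⟨(le_max_right _ _).trans_lt (lt_add_one _), hlt⟩,
      (le_max_left _ _).trans_lt (lt_add_one _), hlt⟩
  · obtain ⟨β, hβ, -, hβδ⟩ := hlim 0 h0
    exact ⟨hβ.1.trans hβδ, hδ⟩

end Clubs

section Regular

variable {κ : Cardinal.{u}}

theorem exists_gt_forall_mem_of_isClubIn (hκ : κ.IsRegular) (hκ₀ : ℵ₀ < κ)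
    (E : Ordinal.{u} → Set Ordinal.{u}) (hE : ∀ γ < κ.ord, IsClubIn (E γ) κ.ord)
    {γ₀ : Ordinal.{u}} (hγ₀ : γ₀ < κ.ord) :
    ∃ δ, γ₀ < δ ∧ δ < κ.ord ∧ ∀ γ < δ, δ ∈ E γ := by
  have hunb : ∀ ξ β, ∃ e, ξ < κ.ord → β < κ.ord → e ∈ E ξ ∧ β < e ∧ e < κ.ord := by
    intro ξ β
    by_cases h : ξ < κ.ord ∧ β < κ.ord
    · obtain ⟨e, he⟩ := (hE ξ h.1).2.1 β h.2
      exact ⟨e, fun _ _ => he⟩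
    · exact ⟨0, fun h₁ h₂ => (h ⟨h₁, h₂⟩).elim⟩
  choose next hnext using hunb
  -- `f β` bounds, for every `ξ < β`, a point of `E ξ` above `β`; its closure points do the job
  let f : Ordinal.{u} → Ordinal.{u} := fun β => ⨆ ξ : Iio β, (next ξ β + 1)
  have hnext_lt : ∀ β, ∀ ξ < β, next ξ β < f β := fun β ξ hξ =>
    (lt_add_one _).trans_le (Ordinal.le_iSup (fun ξ : Iio β => next ξ β + 1) ⟨ξ, hξ⟩)
  have hf : ∀ β < κ.ord, f β < κ.ord := by
    intro β hβ
    have hcard : Cardinal.lift.{u} #(Iio β) < (Ordinal.lift.{u + 1} κ.ord).cof := by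
      rw [Cardinal.mk_Iio_ordinal, ← lift_cof, hκ.cof_ord, Cardinal.lift_lift]
      exact Cardinal.lift_lt.2 (lt_ord.1 hβ)
    exact lift_iSup_add_one_lt_of_lt_cof hcard fun ξ => (hnext ξ β (ξ.2.trans hβ) hβ).2.2
  have hl : IsSuccLimit κ.ord := isSuccLimit_ord hκ₀.le
  set δ := nfp f (γ₀ + 1)
  have hδ : δ < κ.ord := nfp_lt_ord (by rwa [hκ.cof_ord]) hf (hl.add_one_lt hγ₀)
  have hγ₀δ : γ₀ < δ := (lt_add_one γ₀).trans_le (le_nfp _ _)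
  refine ⟨δ, hγ₀δ, hδ, fun γ hγ =>
    (hE γ (hγ.trans hδ)).2.2 δ hδ (hγ₀δ.trans_le' zero_le) fun γ' hγ' => ?_⟩
  obtain ⟨n, hn⟩ := lt_nfp_iff.1 (max_lt hγ hγ')
  have hβ : f^[n] (γ₀ + 1) < κ.ord := (iterate_le_nfp f _ n).trans_lt hδ
  obtain ⟨hmem, hβe, -⟩ := hnext γ _ (hγ.trans hδ) hβ
  refine ⟨_, hmem, (le_max_right _ _).trans_lt (hn.trans hβe), ?_⟩
  calc next γ (f^[n] (γ₀ + 1)) < f (f^[n] (γ₀ + 1)) :=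
        hnext_lt _ γ ((le_max_left _ _).trans_lt hn)
    _ = f^[n + 1] (γ₀ + 1) := (Function.iterate_succ_apply' f n _).symm
    _ ≤ δ := iterate_le_nfp f _ (n + 1)

theorem isClubIn_diag (hκ : κ.IsRegular) (hκ₀ : ℵ₀ < κ) (E : Ordinal.{u} → Set Ordinal.{u})
    (hE : ∀ γ < κ.ord, IsClubIn (E γ) κ.ord) :
    IsClubIn {δ | δ < κ.ord ∧ ∀ γ < δ, δ ∈ E γ} κ.ord := by
  refine ⟨fun δ hδ => hδ.1, fun γ₀ hγ₀ => ?_, fun δ hδ h0 hlim => ⟨hδ, fun γ hγ => ?_⟩⟩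
  · obtain ⟨δ, hγ₀δ, hδ, hmem⟩ := exists_gt_forall_mem_of_isClubIn hκ hκ₀ E hE hγ₀
    exact ⟨δ, ⟨hδ, hmem⟩, hγ₀δ, hδ⟩
  · refine (hE γ (hγ.trans hδ)).2.2 δ hδ h0 fun γ' hγ' => ?_
    obtain ⟨β, hβ, hβ₁, hβ₂⟩ := hlim (max γ γ') (max_lt hγ hγ')
    exact ⟨β, hβ.2 γ ((le_max_left _ _).trans_lt hβ₁), (le_max_right _ _).trans_lt hβ₁, hβ₂⟩

theorem IsClubIn.inter (hκ : κ.IsRegular) (hκ₀ : ℵ₀ < κ) {C₁ C₂ : Set Ordinal.{u}}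
    (h₁ : IsClubIn C₁ κ.ord) (h₂ : IsClubIn C₂ κ.ord) : IsClubIn (C₁ ∩ C₂) κ.ord := by
  classical
  refine ⟨fun δ hδ => h₁.1 hδ.1, fun γ hγ => ?_, fun δ hδ h0 hlim =>
    ⟨h₁.2.2 δ hδ h0 fun γ hγ => ?_, h₂.2.2 δ hδ h0 fun γ hγ => ?_⟩⟩
  · have h1κ : (1 : Ordinal) < κ.ord := one_lt_omega0.trans (omega0_lt_ord.2 hκ₀)
    -- a point above `1` lying in `E ξ` for all `ξ < δ`, where `E = C₁, C₂, C₂, …`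
    obtain ⟨δ, hγδ, hδ, hmem⟩ := exists_gt_forall_mem_of_isClubIn hκ hκ₀
      (fun ξ => if ξ = 0 then C₁ else C₂) (fun ξ _ => by split_ifs <;> assumption)
      (max_lt hγ h1κ)
    have h1δ : 1 < δ := (le_max_right _ _).trans_lt hγδ
    exact ⟨δ, ⟨by simpa using hmem 0 (zero_lt_one.trans h1δ), by simpa using hmem 1 h1δ⟩,
      (le_max_left _ _).trans_lt hγδ, hδ⟩
  · obtain ⟨β, hβ, hβγ⟩ := hlim γ hγ
    exact ⟨β, hβ.1, hβγ⟩
  · obtain ⟨β, hβ, hβγ⟩ := hlim γ hγ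
    exact ⟨β, hβ.2, hβγ⟩

end Regular

section Stationary

variable {κ θ : Cardinal.{u}}

def IsStationaryCofGE (κ θ : Cardinal.{u}) (S : Set Ordinal.{u}) : Prop :=
  ∀ E, IsClubIn E κ.ord → ∃ δ ∈ E ∩ S, θ ≤ δ.cof

def clubFilterCofGE (κ θ : Cardinal.{u}) : Set (Set Ordinal.{u}) :=
  {T | T ⊆ Iio κ.ord ∧ ∃ E, IsClubIn E κ.ord ∧ E ⊆ T ∪ {δ ∈ Iio κ.ord | δ.cof < θ}}

theorem diff_notMem_clubFilterCofGE_iff {S : Set Ordinal.{u}} :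
    Iio κ.ord \ S ∉ clubFilterCofGE κ θ ↔ IsStationaryCofGE κ θ S := by
  refine ⟨fun h E hE => ?_, fun hS ⟨_, E, hE, hsub⟩ => ?_⟩
  · by_contra! hS
    refine h ⟨sdiff_subset, E, hE, fun δ hδ => ?_⟩
    by_cases hδS : δ ∈ S
    · exact Or.inr ⟨hE.1 hδ, hS δ ⟨hδ, hδS⟩⟩
    · exact Or.inl ⟨hE.1 hδ, hδS⟩
  · obtain ⟨δ, ⟨hδE, hδS⟩, hcof⟩ := hS E hE
    rcases hsub hδE with h | h
    exacts [h.2 hδS, h.2.not_ge hcof]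

namespace IsStationaryCofGE

variable {S : Set Ordinal.{u}}

theorem mono {T : Set Ordinal.{u}} (hST : S ⊆ T) (hS : IsStationaryCofGE κ θ S) :
    IsStationaryCofGE κ θ T := fun E hE =>
  (hS E hE).imp fun _ h => ⟨⟨h.1.1, hST h.1.2⟩, h.2⟩

theorem exists_mem (hκ₀ : ℵ₀ ≤ κ) (hS : IsStationaryCofGE κ θ S) :
    ∃ δ ∈ S, δ < κ.ord ∧ θ ≤ δ.cof :=
  let ⟨δ, ⟨hδκ, hδS⟩, hcof⟩ := hS _ (isClubIn_Iio (isSuccLimit_ord hκ₀))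
  ⟨δ, hδS, hδκ, hcof⟩

theorem inter_isClubIn (hκ : κ.IsRegular) (hκ₀ : ℵ₀ < κ) (hS : IsStationaryCofGE κ θ S)
    {C : Set Ordinal.{u}} (hC : IsClubIn C κ.ord) : IsStationaryCofGE κ θ (S ∩ C) :=
  fun _ hE => (hS _ (hE.inter hκ hκ₀ hC)).imp fun _ h => ⟨⟨h.1.1.1, h.1.2, h.1.1.2⟩, h.2⟩

theorem exists_fiber_of_regressive (hκ : κ.IsRegular) (hκ₀ : ℵ₀ < κ)
    (hS : IsStationaryCofGE κ θ S) (g : Ordinal.{u} → Ordinal.{u})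
    (hg : ∀ δ ∈ S, θ ≤ δ.cof → g δ < δ) :
    ∃ γ, IsStationaryCofGE κ θ (S ∩ g ⁻¹' {γ}) := by
  by_contra! h
  simp only [IsStationaryCofGE, not_forall, not_exists, not_and, not_le] at h
  choose E hE hEcof using h
  obtain ⟨δ, ⟨⟨-, hδ⟩, hδS⟩, hcof⟩ := hS _ (isClubIn_diag hκ hκ₀ E fun γ _ => hE γ)
  exact (hEcof (g δ) δ ⟨hδ _ (hg δ hδS hcof), hδS, rfl⟩).not_ge hcof

theorem exists_fiber_of_mk_image_lt (hκ : κ.IsRegular) (hκ₀ : ℵ₀ < κ)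
    (hS : IsStationaryCofGE κ θ S) {C : Type u} (c : Ordinal.{u} → C) (hc : #(c '' S) < κ) :
    ∃ x, IsStationaryCofGE κ θ (S ∩ c ⁻¹' {x}) := by
  classical
  set μ := (#(c '' S)).ord
  obtain ⟨e⟩ : Nonempty (c '' S ↪ Iio μ) := by
    rw [← lift_mk_le', Cardinal.mk_Iio_ordinal, card_ord, Cardinal.lift_lift]
  let o : Ordinal.{u} → Ordinal.{u} := fun δ => if h : c δ ∈ c '' S then e ⟨c δ, h⟩ else 0
  have hμ : μ < κ.ord := ord_lt_ord.2 hc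
  -- above `μ` the ordinal code `o` of the colour is regressive
  obtain ⟨γ, hγ⟩ := (hS.inter_isClubIn hκ hκ₀ (isClubIn_Ioo (isSuccLimit_ord hκ₀.le) hμ)
    ).exists_fiber_of_regressive hκ hκ₀ o fun δ hδ _ => by
      simp only [o, dif_pos (mem_image_of_mem c hδ.1)]
      exact (e _).2.trans hδ.2.1
  obtain ⟨δ₀, ⟨⟨hδ₀S, -⟩, hδ₀γ⟩, -⟩ := hγ.exists_mem hκ₀.le
  refine ⟨c δ₀, hγ.mono ?_⟩
  rintro δ ⟨⟨hδS, -⟩, hδγ⟩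
  refine ⟨hδS, ?_⟩
  have hcode : o δ = o δ₀ := hδγ.trans hδ₀γ.symm
  simp only [o, mem_image_of_mem c hδS, mem_image_of_mem c hδ₀S, dif_pos] at hcode
  exact congrArg Subtype.val (e.injective (Subtype.ext hcode))

end IsStationaryCofGE

end Stationary

section Filter

variable {κ θ : Cardinal.{u}}

theorem mem_clubFilterCofGE_of_superset {X Y : Set Ordinal.{u}} (hX : X ∈ clubFilterCofGE κ θ)
    (hXY : X ⊆ Y) (hY : Y ⊆ Iio κ.ord) : Y ∈ clubFilterCofGE κ θ :=
  let ⟨_, E, hE, hsub⟩ := hX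
  ⟨hY, E, hE, hsub.trans (union_subset_union_left _ hXY)⟩

theorem inter_mem_clubFilterCofGE (hκ : κ.IsRegular) (hκ₀ : ℵ₀ < κ) {X Y : Set Ordinal.{u}}
    (hX : X ∈ clubFilterCofGE κ θ) (hY : Y ∈ clubFilterCofGE κ θ) :
    X ∩ Y ∈ clubFilterCofGE κ θ := by
  obtain ⟨hXκ, E₁, hE₁, h₁⟩ := hX
  obtain ⟨-, E₂, hE₂, h₂⟩ := hY
  refine ⟨inter_subset_left.trans hXκ, E₁ ∩ E₂, hE₁.inter hκ hκ₀ hE₂, ?_⟩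
  rw [inter_union_distrib_right]
  exact inter_subset_inter h₁ h₂

theorem setOf_gt_mem_clubFilterCofGE (hκ₀ : ℵ₀ ≤ κ) {γ : Ordinal.{u}} (hγ : γ < κ.ord) :
    {δ ∈ Iio κ.ord | γ < δ} ∈ clubFilterCofGE κ θ :=
  ⟨fun _ h => h.1, _, isClubIn_Ioo (isSuccLimit_ord hκ₀) hγ, fun _ hδ => Or.inl ⟨hδ.2, hδ.1⟩⟩

theorem diag_mem_clubFilterCofGE (hκ : κ.IsRegular) (hκ₀ : ℵ₀ < κ)
    (f : Ordinal.{u} → Set Ordinal.{u}) (hf : ∀ γ < κ.ord, f γ ∈ clubFilterCofGE κ θ) :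
    {δ ∈ Iio κ.ord | ∀ γ < δ, δ ∈ f γ} ∈ clubFilterCofGE κ θ := by
  have h : ∀ γ, ∃ E, IsClubIn E κ.ord ∧
      (γ < κ.ord → E ⊆ f γ ∪ {δ ∈ Iio κ.ord | δ.cof < θ}) := fun γ =>
    if hγ : γ < κ.ord then
      let ⟨_, E, hE, hsub⟩ := hf γ hγ
      ⟨E, hE, fun _ => hsub⟩
    else ⟨_, isClubIn_Iio (isSuccLimit_ord hκ.aleph0_le), fun h => (hγ h).elim⟩
  choose E hE hsub using h
  refine ⟨fun _ h => h.1, _, isClubIn_diag hκ hκ₀ E fun γ _ => hE γ, ?_⟩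
  rintro δ ⟨hδ, hδE⟩
  by_cases hcof : δ.cof < θ
  · exact Or.inr ⟨hδ, hcof⟩
  · exact Or.inl ⟨hδ, fun γ hγ =>
      (hsub γ (hγ.trans hδ) (hδE γ hγ)).resolve_right fun h => hcof h.2⟩

theorem setOf_cof_ge_mem_clubFilterCofGE (hκ₀ : ℵ₀ ≤ κ) :
    {δ ∈ Iio κ.ord | θ ≤ δ.cof} ∈ clubFilterCofGE κ θ :=
  ⟨fun _ h => h.1, _, isClubIn_Iio (isSuccLimit_ord hκ₀), fun δ hδ =>
    (le_or_gt θ δ.cof).imp (⟨hδ, ·⟩) (⟨hδ, ·⟩)⟩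

end Filter

section DeltaSystem

variable {V : Type u} {κ θ : Cardinal.{u}}

theorem mk_le_card_of_injOn {A : Set V} {j : V → Ordinal.{u}} {o : Ordinal.{u}} (hj : InjOn j A)
    (ho : MapsTo j A (Iio o)) : #A ≤ o.card := by
  rw [← Cardinal.lift_le.{u + 1}, ← mk_image_eq_of_injOn_lift j A hj, ← Cardinal.mk_Iio_ordinal,
    Cardinal.lift_id'.{u, u + 1}]
  exact mk_le_mk_of_subset ho.image_subset

theorem exists_injOn_mapsTo_Iio_ord {U : Set V} (hU : #U ≤ κ) :
    ∃ j : V → Ordinal.{u}, InjOn j U ∧ MapsTo j U (Iio κ.ord) := by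
  classical
  obtain ⟨e⟩ : Nonempty (U ↪ Iio κ.ord) := by
    rw [← lift_mk_le', Cardinal.mk_Iio_ordinal, card_ord, Cardinal.lift_lift]
    exact Cardinal.lift_le.2 hU
  refine ⟨fun v => if h : v ∈ U then e ⟨v, h⟩ else 0, fun v hv w hw hvw => ?_, fun v hv => ?_⟩
  · simp only [dif_pos hv, dif_pos hw] at hvw
    exact congrArg Subtype.val (e.injective (Subtype.ext hvw))
  · simp only [dif_pos hv]
    exact (e _).2

theorem mk_biUnion_le_of_subset_Iio_ord (hκ : ℵ₀ ≤ κ) {S : Set Ordinal.{u}}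
    (hS : S ⊆ Iio κ.ord) {B : Ordinal.{u} → Set V} (hB : ∀ α ∈ S, #(B α) ≤ κ) :
    #(⋃ α ∈ S, B α) ≤ κ := by
  rw [← Cardinal.lift_le.{u + 1}]
  calc Cardinal.lift.{u + 1} #(⋃ α ∈ S, B α)
      ≤ Cardinal.lift.{u} #S * ⨆ α : S, Cardinal.lift.{u + 1} #(B α) := mk_biUnion_le_lift B S
    _ ≤ Cardinal.lift.{u + 1} κ * Cardinal.lift.{u + 1} κ := by
        gcongr
        · rw [Cardinal.lift_id'.{u, u + 1}, ← card_ord κ, ← Cardinal.mk_Iio_ordinal]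
          exact mk_le_mk_of_subset hS
        · exact ciSup_le' fun α => Cardinal.lift_le.2 (hB α α.2)
    _ = Cardinal.lift κ := by rw [← Cardinal.lift_mul, mul_eq_self hκ]

theorem mk_setOf_subset_mk_lt_le (s : Set V) (θ : Cardinal.{u}) :
    #{t | t ⊆ s ∧ #t < θ} ≤ θ * max #s ℵ₀ ^< θ := by
  have hsub : {t | t ⊆ s ∧ #t < θ} ⊆
      ⋃ i : θ.ord.ToType, {t | t ⊆ s ∧ #t ≤ (ToType.toOrd i).1.card} := by
    rintro t ⟨hts, ht⟩
    exact mem_iUnion.2 ⟨ToType.mk ⟨(#t).ord, ord_lt_ord.2 ht⟩, hts, by simp⟩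
  calc _ ≤ _ := mk_le_mk_of_subset hsub
    _ ≤ #θ.ord.ToType * ⨆ i : θ.ord.ToType, #{t | t ⊆ s ∧ #t ≤ (ToType.toOrd i).1.card} :=
        mk_iUnion_le _
    _ ≤ θ * max #s ℵ₀ ^< θ := by
        rw [mk_toType, card_ord]
        gcongr
        exact ciSup_le' fun i => (mk_bounded_subset_le s _).trans
          (le_powerlt _ (lt_ord.1 (ToType.toOrd i).2))

theorem mk_setOf_subset_mk_lt_lt (hκ₀ : ℵ₀ < κ) (hθκ : θ < κ)
    (hsmall : ∀ α : Ordinal.{u}, α < κ.ord → Cardinal.powerlt α.card θ < κ)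
    {s : Set V} {o : Ordinal.{u}} (ho : o < κ.ord) (hs : #s ≤ o.card) :
    #{t | t ⊆ s ∧ #t < θ} < κ := by
  have hmax : max #s ℵ₀ ≤ (max o ω).card :=
    max_le (hs.trans (card_le_card (le_max_left _ _)))
      (card_omega0 ▸ card_le_card (le_max_right _ _))
  calc _ ≤ θ * max #s ℵ₀ ^< θ := mk_setOf_subset_mk_lt_le s θ
    _ ≤ θ * (max o ω).card ^< θ := by
        gcongr
        exact powerlt_le.2 fun μ hμ => (power_le_power_right hmax).trans (le_powerlt _ hμ)
    _ < κ := mul_lt_of_lt hκ₀.le hθκ (hsmall _ (max_lt ho (omega0_lt_ord.2 hκ₀)))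

theorem sSup_image_inter_Iio_lt (j : V → Ordinal.{u}) {B : Set V} {α : Ordinal.{u}}
    (h : #B < α.cof) : sSup (j '' B ∩ Iio α) < α := by
  refine sSup_lt_of_lt_cof ?_ fun _ h => h.2
  rw [← lift_cof]
  calc #↑(j '' B ∩ Iio α) ≤ #↑(j '' B) := mk_le_mk_of_subset inter_subset_left
    _ ≤ Cardinal.lift #B := by
        rw [← Cardinal.lift_id'.{u, u + 1} #↑(j '' B)]
        exact mk_image_le_lift
    _ < Cardinal.lift α.cof := Cardinal.lift_lt.2 h

theorem le_sSup_image_inter_Iio (j : V → Ordinal.{u}) {B : Set V} {α : Ordinal.{u}} {v : V}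
    (hv : v ∈ B) (hα : j v < α) : j v ≤ sSup (j '' B ∩ Iio α) :=
  le_csSup (bddAbove_Iio.mono inter_subset_right) ⟨mem_image_of_mem j hv, hα⟩

theorem exists_isClubIn_forall_mapsTo_Iio (hκ : κ.IsRegular) (hκ₀ : ℵ₀ < κ)
    {S : Set Ordinal.{u}} {B : Ordinal.{u} → Set V} (hB : ∀ α ∈ S, #(B α) < κ)
    {j : V → Ordinal.{u}} (hj : ∀ α ∈ S, MapsTo j (B α) (Iio κ.ord)) :
    ∃ C, IsClubIn C κ.ord ∧ ∀ δ ∈ C, ∀ α ∈ S, α < δ → MapsTo j (B α) (Iio δ) := by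
  classical
  have hl : IsSuccLimit κ.ord := isSuccLimit_ord hκ₀.le
  let F : Ordinal.{u} → Ordinal.{u} := fun α =>
    if α ∈ S then sSup (j '' B α ∩ Iio κ.ord) else 0
  have hF : ∀ α, F α < κ.ord := fun α => by
    by_cases hα : α ∈ S
    · simp only [F, if_pos hα]
      exact sSup_image_inter_Iio_lt j (by rw [hκ.cof_ord]; exact hB α hα)
    · simpa [F, hα] using hl.bot_lt
  refine ⟨_, isClubIn_diag hκ hκ₀ (fun α => Ioo (F α) κ.ord) fun α _ =>
    isClubIn_Ioo hl (hF α), ?_⟩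
  rintro δ ⟨-, hδ⟩ α hα hαδ v hv
  have hvF : j v ≤ F α := by
    simp only [F, if_pos hα]
    exact le_sSup_image_inter_Iio j hv (hj α hα hv)
  exact hvF.trans_lt (hδ α hαδ).1

theorem inter_eq_biInter_of_inter_subset {ι : Type*} [LinearOrder ι] {Z : Set ι}
    {B : ι → Set V} {r : Set V} (hroot : ∀ α ∈ Z, ∀ β ∈ Z, B α ∩ r ⊆ B β)
    (hsep : ∀ α ∈ Z, ∀ β ∈ Z, α < β → B α ∩ B β ⊆ r) :
    ∀ α ∈ Z, ∀ β ∈ Z, α ≠ β → B α ∩ B β = ⋂ γ ∈ Z, B γ := by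
  intro α hα β hβ hne
  refine Subset.antisymm (fun v hv => mem_iInter₂.2 fun γ hγ => ?_)
    fun v hv => ⟨mem_iInter₂.1 hv α hα, mem_iInter₂.1 hv β hβ⟩
  have hvr : v ∈ r := by
    rcases hne.lt_or_gt with h | h
    · exact hsep α hα β hβ h hv
    · exact hsep β hβ α hα h ⟨hv.2, hv.1⟩
  exact hroot α hα γ hγ ⟨hv.1, hvr⟩

end DeltaSystem

theorem IsStationaryCofGE.exists_deltaSystem {V : Type u} {κ θ : Cardinal.{u}}
    (hκ : κ.IsRegular) (hκ₀ : ℵ₀ < κ) (hθκ : θ < κ)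
    (hsmall : ∀ α : Ordinal.{u}, α < κ.ord → Cardinal.powerlt α.card θ < κ)
    {S : Set Ordinal.{u}} (hS : IsStationaryCofGE κ θ S) (hSκ : S ⊆ Iio κ.ord)
    (B : Ordinal.{u} → Set V) (hB : ∀ α ∈ S, #(B α) < θ) :
    ∃ Z ⊆ S, IsStationaryCofGE κ θ Z ∧ ∃ R, ∀ α ∈ Z, ∀ β ∈ Z, α ≠ β → B α ∩ B β = R := by
  have hBκ : ∀ α ∈ S, #(B α) < κ := fun α hα => (hB α hα).trans hθκ
  set U := ⋃ α ∈ S, B α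
  obtain ⟨j, hjU, hjκ⟩ := exists_injOn_mapsTo_Iio_ord
    (mk_biUnion_le_of_subset_Iio_ord hκ.aleph0_le hSκ fun α hα => (hBκ α hα).le)
  have hjB : ∀ α ∈ S, MapsTo j (B α) (Iio κ.ord) := fun α hα =>
    hjκ.mono_left (subset_biUnion_of_mem hα)
  let g : Ordinal.{u} → Ordinal.{u} := fun α => sSup (j '' B α ∩ Iio α)
  have hg : ∀ α ∈ S, θ ≤ α.cof → g α < α := fun α hα hcof =>
    sSup_image_inter_Iio_lt j ((hB α hα).trans_le hcof)
  obtain ⟨ρ, hS₁⟩ := hS.exists_fiber_of_regressive hκ hκ₀ g hg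
  have hρ : ρ < κ.ord := by
    obtain ⟨δ, ⟨hδS, hδρ⟩, hδκ, hcof⟩ := hS₁.exists_mem hκ₀.le
    exact (hδρ : g δ = ρ) ▸ (hg δ hδS hcof).trans hδκ
  let root : Ordinal.{u} → Set V := fun α => B α ∩ j ⁻¹' Iic ρ
  have hU : #↑(U ∩ j ⁻¹' Iic ρ) ≤ (ρ + 1).card :=
    mk_le_card_of_injOn (hjU.mono inter_subset_left) fun _ hv => mem_Iio.2 (lt_add_one_iff.2 hv.2)
  have hroots : #↑(root '' (S ∩ g ⁻¹' {ρ})) < κ := by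
    refine (mk_le_mk_of_subset ?_).trans_lt
      (mk_setOf_subset_mk_lt_lt hκ₀ hθκ hsmall ((isSuccLimit_ord hκ₀.le).add_one_lt hρ) hU)
    rintro _ ⟨α, ⟨hα, -⟩, rfl⟩
    exact ⟨inter_subset_inter_left _ (subset_biUnion_of_mem hα),
      (mk_le_mk_of_subset inter_subset_left).trans_lt (hB α hα)⟩
  obtain ⟨t, hS₂⟩ := hS₁.exists_fiber_of_mk_image_lt hκ hκ₀ root hroots
  obtain ⟨C, hC, hCsep⟩ := exists_isClubIn_forall_mapsTo_Iio hκ hκ₀ hBκ hjB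
  refine ⟨_, fun α hα => hα.1.1.1, hS₂.inter_isClubIn hκ hκ₀ hC, _,
    inter_eq_biInter_of_inter_subset (r := j ⁻¹' Iic ρ) ?_ ?_⟩
  · rintro α ⟨⟨-, hα⟩, -⟩ β ⟨⟨-, hβ⟩, -⟩
    have hroot : root α = root β := (hα : root α = t).trans (hβ : root β = t).symm
    exact hroot.trans_subset inter_subset_left
  · rintro α ⟨⟨⟨hαS, -⟩, -⟩, -⟩ β ⟨⟨⟨-, hβρ⟩, -⟩, hβC⟩ hαβ v ⟨hvα, hvβ⟩
    -- `j v < β`, as `β` lies in the separating club, so `j v ≤ g β = ρ`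
    exact (hβρ : g β = ρ) ▸ le_sSup_image_inter_Iio j hvβ (hCsep β hβC α hαS hαβ hvα)

theorem stmt14_general {V : Type u} (κ θ : Cardinal.{u})
    (hregκ : κ.IsRegular) (huncκ : Cardinal.aleph0 < κ)
    (hθκ : θ < κ)
    (hsmall : ∀ α : Ordinal.{u}, α < κ.ord → Cardinal.powerlt α.card θ < κ)
    (K : Set Ordinal.{u}) (hK : K = Set.Iio κ.ord)
    (D : Set (Set Ordinal.{u}))
    (hD : D = {T | T ⊆ K ∧ ∃ E, IsClubIn E κ.ord ∧
      E ⊆ T ∪ {δ ∈ K | δ.cof < θ}}) :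
    (∀ X ∈ D, ∀ Y, X ⊆ Y → Y ⊆ K → Y ∈ D) ∧
    (∀ X ∈ D, ∀ Y ∈ D, X ∩ Y ∈ D) ∧
    (∀ γ ∈ K, {δ ∈ K | γ < δ} ∈ D) ∧
    (∀ f : Ordinal.{u} → Set Ordinal.{u}, (∀ γ ∈ K, f γ ∈ D) →
      {δ ∈ K | ∀ γ < δ, δ ∈ f γ} ∈ D) ∧
    ({δ ∈ K | θ ≤ δ.cof} ∈ D) ∧
    (∀ Y ⊆ K, K \ Y ∉ D → ∀ B : Ordinal.{u} → Set V,
      (∀ α ∈ Y, Cardinal.mk (B α) < θ) →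
      ∃ Z ⊆ Y, K \ Z ∉ D ∧
        ∃ Bs : Set V, ∀ α ∈ Z, ∀ β ∈ Z, α ≠ β → B α ∩ B β = Bs) := by
  subst hK
  change D = clubFilterCofGE κ θ at hD
  subst hD
  refine ⟨fun X hX Y => mem_clubFilterCofGE_of_superset hX,
    fun X hX Y => inter_mem_clubFilterCofGE hregκ huncκ hX,
    fun γ => setOf_gt_mem_clubFilterCofGE huncκ.le,
    diag_mem_clubFilterCofGE hregκ huncκ,
    setOf_cof_ge_mem_clubFilterCofGE huncκ.le, fun Y hYκ hY B hB => ?_⟩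
  rw [diff_notMem_clubFilterCofGE_iff] at hY
  obtain ⟨Z, hZY, hZ, hΔ⟩ := hY.exists_deltaSystem hregκ huncκ hθκ hsmall hYκ B hB
  exact ⟨Z, hZY, diff_notMem_clubFilterCofGE_iff.2 hZ, hΔ⟩

/-- the filter `D = {S ⊆ κ : S ∪ {δ < κ : cf(δ) < θ} contains a
club}` is a normal filter on `κ` concentrating on `{δ : cf(δ) ≥ θ}`, and it
has the Δ-system `θ`-property. -/
theorem stmt14 {V : Type u} (κ θ : Cardinal.{u})
    (hregκ : κ.IsRegular) (huncκ : Cardinal.aleph0 < κ)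
    (hregθ : θ.IsRegular) (huncθ : Cardinal.aleph0 < θ) (hθκ : θ < κ)
    (hsmall : ∀ α : Ordinal.{u}, α < κ.ord → Cardinal.powerlt α.card θ < κ)
    (K : Set Ordinal.{u}) (hK : K = Set.Iio κ.ord)
    (D : Set (Set Ordinal.{u}))
    (hD : D = {T | T ⊆ K ∧ ∃ E, IsClubIn E κ.ord ∧
      E ⊆ T ∪ {δ ∈ K | δ.cof < θ}}) :
    (∀ X ∈ D, ∀ Y, X ⊆ Y → Y ⊆ K → Y ∈ D) ∧
    (∀ X ∈ D, ∀ Y ∈ D, X ∩ Y ∈ D) ∧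
    (∀ γ ∈ K, {δ ∈ K | γ < δ} ∈ D) ∧
    (∀ f : Ordinal.{u} → Set Ordinal.{u}, (∀ γ ∈ K, f γ ∈ D) →
      {δ ∈ K | ∀ γ < δ, δ ∈ f γ} ∈ D) ∧
    ({δ ∈ K | θ ≤ δ.cof} ∈ D) ∧
    (∀ Y ⊆ K, K \ Y ∉ D → ∀ B : Ordinal.{u} → Set V,
      (∀ α ∈ Y, Cardinal.mk (B α) < θ) →
      ∃ Z ⊆ Y, K \ Z ∉ D ∧
        ∃ Bs : Set V, ∀ α ∈ Z, ∀ β ∈ Z, α ≠ β → B α ∩ B β = Bs) :=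
  stmt14_general κ θ hregκ huncκ hθκ hsmall K hK D hD
end
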